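/- Let p be a prime, let r, m, e be positive integers with e ≥ 2, and let d_{e−1},…,d_1 be positive integers; set d_0 := 0. Then the number of m-tuples α = (a_1,…,a_m) of natural numbers with a_1+⋯+a_m = r(p^e−1) and d_i(α) = d_i for every 1 ≤ i ≤ e−1 equals P_m(r(p−1)−d_{e−1}) · ∏_{i=0}^{e−2} M_{p,m}(r(p−1)+d_{i+1}·p−d_i). -/

import Mathlib

/-- `Mpm p m i` is the number of `m`-tuples `(b_1,…,b_m)` of integers with
`0 ≤ b_j ≤ p−1` and `b_1+⋯+b_m = i`; it is the coefficient of `t^i` in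
`(1+t+⋯+t^{p−1})^m`. -/
def Mpm (p m : ℕ) (i : ℤ) : ℕ :=
  (Finset.univ.filter (fun b : Fin m → Fin p => (∑ j, ((b j : ℕ) : ℤ)) = i)).card


/-- `Pm m k = binom(k+m−1, m−1)` for `k ≥ 0`, and `0` for `k < 0`. -/
def Pm (m : ℕ) (k : ℤ) : ℕ :=
  if 0 ≤ k then (k.toNat + m - 1).choose (m - 1) else 0


/-- `dArr p r a i` is the integer `d_i(α) = ⌊((a_1 mod p^i)+⋯+(a_m mod p^i))/p^i⌋ − ⌊r(p^i−1)/p^i⌋`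
for `α = (a_1,…,a_m)`. -/
def dArr (p r : ℕ) {m : ℕ} (a : Fin m → ℕ) (i : ℕ) : ℤ :=
  (((∑ j, a j % p ^ i) / p ^ i : ℕ) : ℤ) - (((r * (p ^ i - 1)) / p ^ i : ℕ) : ℤ)


/-! Write each `a_j` as its lowest `n = e - 1` base-`p` digits plus `p ^ n` times a high part.
Since the total is `r (p^e - 1)`, the sum `S_i` of the `a_j mod p^i` is `≡ r (p^i - 1) mod p^i`,
so `d_i(α) = d_i` says exactly `S_i = r (p^i - 1) + p^i d_i`. Taking differences of consecutive
`S_i`, these conditions say that the `i`-th digit column sums to `r (p - 1) + p d_{i+1} - d_i`,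
and then the total fixes the sum of the high parts as `r (p - 1) - d_{e-1}`. Digit columns and
high parts vary independently, giving the factors `M_{p,m}` and (stars and bars) `P_m`. -/

open Finset

lemma Int.eq_add_mul_iff_modEq_and_ediv_sub {x y q c : ℤ} (hq : q ≠ 0) :
    x = y + q * c ↔ x ≡ y [ZMOD q] ∧ x / q - y / q = c := by
  constructor
  · rintro rfl
    refine ⟨?_, ?_⟩
    · simp [Int.ModEq, Int.add_mul_emod_self_left]
    · rw [Int.add_mul_ediv_left _ _ hq]; ring
  · rintro ⟨hmod, hdiv⟩
    rw [← Int.mul_ediv_add_emod x q, ← Int.mul_ediv_add_emod y q, hmod, ← hdiv]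
    ring

lemma forall_le_sum_range_eq_iff {M : Type*} [AddCancelCommMonoid M] {f g : ℕ → M} {n : ℕ} :
    (∀ i ≤ n, ∑ t ∈ range i, f t = ∑ t ∈ range i, g t) ↔ ∀ t < n, f t = g t := by
  constructor
  · intro h t ht
    have hsucc := h (t + 1) ht
    rw [sum_range_succ, sum_range_succ, h t ht.le] at hsucc
    exact add_left_cancel hsucc
  · intro h i hi
    exact sum_congr rfl fun t ht => h t ((mem_range.mp ht).trans_le hi)

lemma sub_one_add_pow_mul_eq_sum_range {R : Type*} [CommRing R] (r p : R) (d : ℕ → R)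
    (hd0 : d 0 = 0) (i : ℕ) :
    r * (p ^ i - 1) + p ^ i * d i = ∑ t ∈ range i, (r * (p - 1) + d (t + 1) * p - d t) * p ^ t := by
  induction i with
  | zero => simp [hd0]
  | succ i ih => rw [sum_range_succ, ← ih]; ring

lemma natCast_mul_pow_sub_one (r p i : ℕ) (hp : 0 < p) :
    ((r * (p ^ i - 1) : ℕ) : ℤ) = r * ((p : ℤ) ^ i - 1) := by
  push_cast [Nat.one_le_pow i p hp]
  ring

lemma sum_mod_pow_eq_sum_range {m : ℕ} (p : ℕ) (a : Fin m → ℕ) (i : ℕ) :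
    ∑ j, a j % p ^ i = ∑ t ∈ range i, (∑ j, a j / p ^ t % p) * p ^ t := by
  induction i with
  | zero => simp [Nat.mod_one]
  | succ i ih =>
    simp only [Nat.mod_pow_succ, sum_add_distrib, sum_range_succ, ← ih, ← mul_sum]
    ring

def digitsDivEquiv (p n : ℕ) [NeZero p] : ℕ ≃ (Fin n → Fin p) × ℕ :=
  (Nat.divModEquiv (p ^ n)).trans <|
    (Equiv.prodComm _ _).trans <| Equiv.prodCongr finFunctionFinEquiv.symm (Equiv.refl ℕ)

lemma digitsDivEquiv_apply_fst {p n : ℕ} [NeZero p] (a : ℕ) (t : Fin n) :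
    ((digitsDivEquiv p n a).1 t : ℕ) = a / p ^ (t : ℕ) % p := by
  simp only [digitsDivEquiv, Equiv.trans_apply, Nat.divModEquiv_apply, Equiv.prodComm_apply,
    Equiv.prodCongr_apply, Prod.map, Prod.swap, finFunctionFinEquiv_symm_apply_val, Fin.val_ofNat]
  rw [← Nat.mod_mul_right_div_self, ← pow_succ, Nat.mod_mod_of_dvd _ (pow_dvd_pow p t.2),
    pow_succ, Nat.mod_mul_right_div_self]

lemma digitsDivEquiv_apply_snd {p n : ℕ} [NeZero p] (a : ℕ) :
    (digitsDivEquiv p n a).2 = a / p ^ n := rfl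

def tupleDigitsDivEquiv (p n m : ℕ) [NeZero p] :
    (Fin m → ℕ) ≃ (Fin n → Fin m → Fin p) × (Fin m → ℕ) :=
  (Equiv.piCongrRight fun _ => digitsDivEquiv p n).trans <|
    (Equiv.arrowProdEquivProdArrow _ _ _).trans <|
      Equiv.prodCongr (Equiv.piComm _) (Equiv.refl _)

lemma tupleDigitsDivEquiv_apply_fst {p n m : ℕ} [NeZero p] (a : Fin m → ℕ) (t : Fin n)
    (j : Fin m) :
    ((tupleDigitsDivEquiv p n m a).1 t j : ℕ) = a j / p ^ (t : ℕ) % p :=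
  digitsDivEquiv_apply_fst (a j) t

lemma tupleDigitsDivEquiv_apply_snd {p n m : ℕ} [NeZero p] (a : Fin m → ℕ) (j : Fin m) :
    (tupleDigitsDivEquiv p n m a).2 j = a j / p ^ n := rfl

lemma card_sum_val_eq (p m : ℕ) (i : ℤ) :
    Nat.card {b : Fin m → Fin p // ∑ j, ((b j : ℕ) : ℤ) = i} = Mpm p m i := by
  rw [Nat.card_eq_fintype_card, Fintype.card_subtype, Mpm]

lemma card_sum_eq {m : ℕ} (hm : 0 < m) (K : ℤ) :
    Nat.card {h : Fin m → ℕ // ∑ j, ((h j : ℕ) : ℤ) = K} = Pm m K := by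
  by_cases hK : 0 ≤ K
  · have hcast : ∀ h : Fin m → ℕ, ∑ j, ((h j : ℕ) : ℤ) = K ↔ ∑ j, h j = K.toNat := fun h => by
      rw [← Int.toNat_of_nonneg hK]; exact_mod_cast Iff.rfl
    rw [Nat.card_congr (Equiv.subtypeEquivRight hcast),
      Nat.card_congr (Sym.equivNatSumOfFintype (Fin m) K.toNat).symm, Nat.card_eq_fintype_card,
      Sym.card_sym_eq_choose, Fintype.card_fin, Pm, if_pos hK,
      show m + K.toNat - 1 = K.toNat + (m - 1) by omega, Nat.choose_symm_add,
      show K.toNat + (m - 1) = K.toNat + m - 1 by omega]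
  · have : IsEmpty {h : Fin m → ℕ // ∑ j, ((h j : ℕ) : ℤ) = K} :=
      ⟨fun ⟨h, hh⟩ => hK (hh ▸ by positivity)⟩
    rw [Nat.card_of_isEmpty, Pm, if_neg hK]

lemma card_digits_high_eq {p n m : ℕ} (hm : 0 < m) (g : Fin n → ℤ) (K : ℤ) :
    Nat.card {x : (Fin n → Fin m → Fin p) × (Fin m → ℕ) //
        (∀ k, ∑ j, ((x.1 k j : ℕ) : ℤ) = g k) ∧ ∑ j, ((x.2 j : ℕ) : ℤ) = K} =
      (∏ k, Mpm p m (g k)) * Pm m K := by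
  rw [Nat.card_congr (Equiv.subtypeProdEquivProd
      (p := fun b : Fin n → Fin m → Fin p => ∀ k, ∑ j, ((b k j : ℕ) : ℤ) = g k)
      (q := fun h : Fin m → ℕ => ∑ j, ((h j : ℕ) : ℤ) = K)), Nat.card_prod,
    Nat.card_congr (Equiv.subtypePiEquivPi (β := fun _ : Fin n => Fin m → Fin p)
      (p := fun k b => ∑ j, ((b j : ℕ) : ℤ) = g k)), Nat.card_pi, card_sum_eq hm]
  simp only [card_sum_val_eq]

section Carries

variable {m p r : ℕ} {d : ℕ → ℤ}

lemma sum_mod_pow_modEq {e i : ℕ} (hp : 0 < p) (hie : i ≤ e) (a : Fin m → ℕ)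
    (hsum : ∑ j, a j = r * (p ^ e - 1)) :
    ((∑ j, a j % p ^ i : ℕ) : ℤ) ≡ r * ((p : ℤ) ^ i - 1) [ZMOD (p : ℤ) ^ i] := by
  have hsum' : ∑ j, (a j : ℤ) = r * ((p : ℤ) ^ e - 1) := by
    rw [← natCast_mul_pow_sub_one r p e hp, ← hsum]; push_cast; rfl
  have hpe : (p : ℤ) ^ e = p ^ i * p ^ (e - i) := by rw [← pow_add, Nat.add_sub_cancel' hie]
  calc ((∑ j, a j % p ^ i : ℕ) : ℤ) = ∑ j, (a j : ℤ) % (p : ℤ) ^ i := by push_cast; rfl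
    _ ≡ ∑ j, (a j : ℤ) [ZMOD (p : ℤ) ^ i] := Int.ModEq.sum fun j _ => Int.mod_modEq _ _
    _ = r * ((p : ℤ) ^ i - 1) + (p : ℤ) ^ i * (r * ((p : ℤ) ^ (e - i) - 1)) := by
      rw [hsum', hpe]; ring
    _ ≡ r * ((p : ℤ) ^ i - 1) [ZMOD (p : ℤ) ^ i] := Int.add_mul_emod_self_left ..

lemma dArr_eq_iff {e i : ℕ} (hp : 0 < p) (hie : i ≤ e) (a : Fin m → ℕ)
    (hsum : ∑ j, a j = r * (p ^ e - 1)) (c : ℤ) :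
    dArr p r a i = c ↔ ((∑ j, a j % p ^ i : ℕ) : ℤ) = r * ((p : ℤ) ^ i - 1) + p ^ i * c := by
  rw [Int.eq_add_mul_iff_modEq_and_ediv_sub (pow_ne_zero i (by exact_mod_cast hp.ne')),
    dArr, Int.natCast_div, Int.natCast_div, natCast_mul_pow_sub_one r p i hp]
  simp only [Nat.cast_pow]
  exact (and_iff_right (sum_mod_pow_modEq hp hie a hsum)).symm

lemma forall_dArr_eq_iff {e n : ℕ} (hp : 0 < p) (hd0 : d 0 = 0) (hne : n ≤ e) (a : Fin m → ℕ)
    (hsum : ∑ j, a j = r * (p ^ e - 1)) :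
    (∀ i, 1 ≤ i → i ≤ n → dArr p r a i = d i) ↔
      ∀ i ≤ n, ((∑ j, a j % p ^ i : ℕ) : ℤ) = r * ((p : ℤ) ^ i - 1) + p ^ i * d i := by
  refine forall_congr' fun i => ?_
  rcases Nat.eq_zero_or_pos i with rfl | hi
  · simp [hd0]
  · simp only [Nat.one_le_iff_ne_zero.mpr hi.ne', forall_true_left]
    exact imp_congr_right fun hin => dArr_eq_iff hp (hin.trans hne) a hsum _

lemma forall_sum_mod_pow_eq_iff (hp : 0 < p) (hd0 : d 0 = 0) (n : ℕ) (a : Fin m → ℕ) :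
    (∀ i ≤ n, ((∑ j, a j % p ^ i : ℕ) : ℤ) = r * ((p : ℤ) ^ i - 1) + p ^ i * d i) ↔
      ∀ t < n, ∑ j, ((a j / p ^ t % p : ℕ) : ℤ) = r * ((p : ℤ) - 1) + d (t + 1) * p - d t := by
  simp only [sum_mod_pow_eq_sum_range, sub_one_add_pow_mul_eq_sum_range _ _ _ hd0]
  push_cast
  rw [forall_le_sum_range_eq_iff]
  have hpt : ∀ t, (p : ℤ) ^ t ≠ 0 := fun t => pow_ne_zero t (by exact_mod_cast hp.ne')
  exact forall₂_congr fun t _ => mul_left_inj' (hpt t)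

lemma sum_eq_iff_sum_div_pow_eq (hp : 0 < p) (n : ℕ) (a : Fin m → ℕ) {c : ℤ}
    (hmod : ((∑ j, a j % p ^ n : ℕ) : ℤ) = r * ((p : ℤ) ^ n - 1) + p ^ n * c) :
    ∑ j, a j = r * (p ^ (n + 1) - 1) ↔ ∑ j, ((a j / p ^ n : ℕ) : ℤ) = r * ((p : ℤ) - 1) - c := by
  have hsplit : ((∑ j, a j : ℕ) : ℤ) =
      p ^ n * ∑ j, ((a j / p ^ n : ℕ) : ℤ) + ((∑ j, a j % p ^ n : ℕ) : ℤ) := by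
    push_cast
    rw [mul_sum, ← sum_add_distrib]
    exact sum_congr rfl fun j _ => (Int.mul_ediv_add_emod _ _).symm
  have hpn : (p : ℤ) ^ n ≠ 0 := pow_ne_zero n (by exact_mod_cast hp.ne')
  rw [← Nat.cast_inj (R := ℤ), natCast_mul_pow_sub_one r p _ hp, hsplit, hmod, pow_succ]
  constructor
  · intro h
    apply mul_left_cancel₀ hpn
    linear_combination h
  · intro h
    linear_combination (p : ℤ) ^ n * h

lemma carry_conditions_iff (hp : 0 < p) (hd0 : d 0 = 0) (n : ℕ) (a : Fin m → ℕ) :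
    (∑ j, a j = r * (p ^ (n + 1) - 1) ∧ ∀ i, 1 ≤ i → i ≤ n → dArr p r a i = d i) ↔
      (∀ t < n, ∑ j, ((a j / p ^ t % p : ℕ) : ℤ) = r * ((p : ℤ) - 1) + d (t + 1) * p - d t) ∧
        ∑ j, ((a j / p ^ n : ℕ) : ℤ) = r * ((p : ℤ) - 1) - d n := by
  rw [← forall_sum_mod_pow_eq_iff hp hd0 n a]
  constructor
  · rintro ⟨hsum, hcarry⟩
    have hS := (forall_dArr_eq_iff hp hd0 n.le_succ a hsum).1 hcarry
    exact ⟨hS, (sum_eq_iff_sum_div_pow_eq hp n a (hS n le_rfl)).1 hsum⟩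
  · rintro ⟨hS, hhigh⟩
    have hsum := (sum_eq_iff_sum_div_pow_eq hp n a (hS n le_rfl)).2 hhigh
    exact ⟨hsum, (forall_dArr_eq_iff hp hd0 n.le_succ a hsum).2 hS⟩

lemma card_carry_conditions_eq [NeZero p] (hd0 : d 0 = 0) (n : ℕ) :
    Nat.card {a : Fin m → ℕ // ∑ j, a j = r * (p ^ (n + 1) - 1) ∧
        ∀ i, 1 ≤ i → i ≤ n → dArr p r a i = d i} =
      Nat.card {x : (Fin n → Fin m → Fin p) × (Fin m → ℕ) //
        (∀ k : Fin n, ∑ j, ((x.1 k j : ℕ) : ℤ) = r * ((p : ℤ) - 1) + d (k + 1) * p - d k) ∧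
          ∑ j, ((x.2 j : ℕ) : ℤ) = r * ((p : ℤ) - 1) - d n} := by
  refine Nat.card_congr ((tupleDigitsDivEquiv p n m).subtypeEquiv fun a => ?_)
  rw [carry_conditions_iff (NeZero.pos p) hd0, Fin.forall_iff]
  simp only [tupleDigitsDivEquiv_apply_fst, tupleDigitsDivEquiv_apply_snd]

end Carries

theorem stmt_6_general (p r m e : ℕ) (hp : p.Prime) (hm : 0 < m)
    (he : 2 ≤ e) (d : ℕ → ℤ) (hd0 : d 0 = 0) :
    Nat.card {a : Fin m → ℕ // (∑ j, a j = r * (p ^ e - 1)) ∧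
        ∀ i, 1 ≤ i → i ≤ e - 1 → dArr p r a i = d i} =
      Pm m ((r : ℤ) * (p - 1) - d (e - 1)) *
        ∏ i ∈ Finset.range (e - 1),
          Mpm p m ((r : ℤ) * (p - 1) + d (i + 1) * p - d i) := by
  obtain ⟨n, rfl⟩ : ∃ n, e = n + 1 := ⟨e - 1, by omega⟩
  have : NeZero p := ⟨hp.ne_zero⟩
  rw [Nat.add_sub_cancel, card_carry_conditions_eq hd0, card_digits_high_eq hm, mul_comm,
    Fin.prod_univ_eq_prod_range (fun i => Mpm p m (r * ((p : ℤ) - 1) + d (i + 1) * p - d i))]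

/-- the number of `m`-tuples with prescribed sum `r(p^e−1)` and
prescribed carry-over data `(d_1,…,d_{e−1})` is the stated product. -/
theorem stmt_6 (p r m e : ℕ) (hp : p.Prime) (hr : 0 < r) (hm : 0 < m)
    (he : 2 ≤ e) (d : ℕ → ℤ) (hd0 : d 0 = 0)
    (hdpos : ∀ i, 1 ≤ i → i ≤ e - 1 → 1 ≤ d i) :
    Nat.card {a : Fin m → ℕ // (∑ j, a j = r * (p ^ e - 1)) ∧
        ∀ i, 1 ≤ i → i ≤ e - 1 → dArr p r a i = d i} =
      Pm m ((r : ℤ) * (p - 1) - d (e - 1)) *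
        ∏ i ∈ Finset.range (e - 1),
          Mpm p m ((r : ℤ) * (p - 1) + d (i + 1) * p - d i) :=
  stmt_6_general p r m e hp hm he d hd0
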